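/- arXiv:2301.13478 — 4 statements merged into one kernel-verified Lean document; each statement's English description precedes it below -/
import Mathlib

section
/- For all x, z in ℝⁿ with z ≠ 0 and r > 0, the Haar probability measure θₙ on the orthogonal group O(n) satisfies θₙ({g ∈ O(n) : |x − g(z)| < r}) ≤ C (r/|z|)^{n−1}, where C depends only on n. -/
open MeasureTheory Metric Set Function
open scoped ENNReal NNReal Topology

noncomputable section

/-- `ℝⁿ` as Euclidean space. -/
abbrev En (n : ℕ) := EuclideanSpace ℝ (Fin n)

instance matrixMeasurableSpace {n : ℕ} : MeasurableSpace (Matrix (Fin n) (Fin n) ℝ) :=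
  MeasurableSpace.pi

/-- The orthogonal group `O(n)`. -/
abbrev On (n : ℕ) := Matrix.orthogonalGroup (Fin n) ℝ

/-- The action of `g ∈ O(n)` on `ℝⁿ`. -/
def act {n : ℕ} (g : On n) (z : En n) : En n :=
  Matrix.toEuclideanLin ((g : Matrix (Fin n) (Fin n) ℝ)) z

/-!
Left-invariance of `θ` and the triangle inequality bound `θ {g | ‖x - g z‖ < r}` by
`p = θ {g | ‖z - g z‖ < 2r}`, and since `O(n)` is transitive on the sphere `‖y‖ = ρ := ‖z‖`, `p` is
also the measure of `{g | ‖y - g z‖ < 2r}` for every `y` on it. These events are disjoint for the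
points `y` of a `4r`-separated set, so `N p ≤ 1` for a maximal such set, of size `N`. Being maximal,
the set is a `4r`-net of the sphere, so the balls of radius `8r` around it cover the shell
`ρ - 4r ≤ ‖y‖ ≤ ρ`, and comparing volumes gives `4r ρⁿ⁻¹ ≤ ρⁿ - (ρ - 4r)ⁿ ≤ N (8r)ⁿ`.
-/

namespace Metric

variable {X : Type*} [PseudoEMetricSpace X]

theorem packingNumber_ne_top_of_totallyBounded {ε : ℝ≥0} {A : Set X} (hε : ε ≠ 0)
    (hA : TotallyBounded A) : packingNumber ε A ≠ ⊤ := by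
  obtain ⟨N, -, hNfin, hN⟩ := exists_finite_isCover_of_totallyBounded (ε := ε / 2) (by simpa) hA
  have h := (packingNumber_two_mul_le_externalCoveringNumber (ε / 2) A).trans
    hN.externalCoveringNumber_le_encard
  rw [mul_div_cancel₀ _ two_ne_zero] at h
  exact ne_top_of_le_ne_top hNfin.encard_lt_top.ne h

theorem finite_maximalSeparatedSet {ε : ℝ≥0} {A : Set X} (h : packingNumber ε A ≠ ⊤) :
    (maximalSeparatedSet ε A).Finite := by
  rw [← Set.encard_ne_top_iff, encard_maximalSeparatedSet h]
  exact h

end Metric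

section IsometricAction

open MulAction

variable {G X : Type*} [Group G] [MeasurableSpace G] [MeasurableMul G] [PseudoMetricSpace X]
  [MulAction G X] [IsIsometricSMul G X] (μ : Measure G) [μ.IsMulLeftInvariant]

theorem measure_dist_smul_lt_of_mem_orbit {y z : X} (hy : y ∈ orbit G z) (r : ℝ) :
    μ {g | dist y (g • z) < r} = μ {g | dist z (g • z) < r} := by
  obtain ⟨h, rfl⟩ := hy
  have : {g : G | dist (h • z) (g • z) < r} = (h⁻¹ * ·) ⁻¹' {g | dist z (g • z) < r} := by
    ext g
    rw [Set.mem_preimage, Set.mem_ofPred, Set.mem_ofPred, mul_smul, ← dist_smul h z, smul_inv_smul]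
  rw [this, measure_preimage_mul]

theorem measure_dist_smul_lt_le_measure_dist_smul_self_lt (x z : X) (r : ℝ) :
    μ {g | dist x (g • z) < r} ≤ μ {g | dist z (g • z) < 2 * r} := by
  rcases Set.eq_empty_or_nonempty {g : G | dist x (g • z) < r} with h | ⟨g₀, hg₀⟩
  · simp [h]
  rw [← measure_dist_smul_lt_of_mem_orbit μ (mem_orbit z g₀)]
  refine measure_mono fun g (hg : dist x (g • z) < r) => ?_
  calc dist (g₀ • z) (g • z) ≤ dist x (g₀ • z) + dist x (g • z) := dist_triangle_left ..
    _ < 2 * r := by rw [Set.mem_ofPred] at hg₀; linarith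

theorem card_mul_measure_dist_smul_self_lt_le_one [IsProbabilityMeasure μ] [MeasurableSpace X]
    [OpensMeasurableSpace X] [MeasurableSMul G X] {z : X} {ε : ℝ≥0} {S : Finset X}
    (hS : ↑S ⊆ orbit G z) (hsep : IsSeparated (2 * ε) (S : Set X)) :
    S.card * μ {g | dist z (g • z) < ε} ≤ 1 := by
  have hdisj : (S : Set X).PairwiseDisjoint fun s => {g : G | dist s (g • z) < ε} := by
    intro a ha b hb hab
    refine Set.disjoint_left.mpr fun g (hga : dist a (g • z) < ε) (hgb : dist b (g • z) < ε) => ?_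
    have : 2 * (ε : ℝ≥0∞) < edist a b := hsep ha hb hab
    rw [edist_dist, ENNReal.lt_ofReal_iff_toReal_lt (by finiteness)] at this
    simp only [ENNReal.toReal_mul, ENNReal.toReal_ofNat, ENNReal.coe_toReal] at this
    linarith [dist_triangle_right a b (g • z)]
  calc (S.card : ℝ≥0∞) * μ {g | dist z (g • z) < ε}
      = ∑ s ∈ S, μ {g | dist s (g • z) < ε} := by
        rw [Finset.sum_congr rfl fun s hs => measure_dist_smul_lt_of_mem_orbit μ (hS hs) ε,
          Finset.sum_const, nsmul_eq_mul]
    _ = μ (⋃ s ∈ S, {g | dist s (g • z) < ε}) :=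
        (measure_biUnion_finset hdisj fun s _ => by
          simpa only [Set.preimage, mem_ball'] using
            measurableSet_ball.preimage (measurable_smul_const (M := G) z)).symm
    _ ≤ 1 := prob_le_one

end IsometricAction

theorem mul_pow_le_pow_succ_sub_pow_succ {ε ρ : ℝ} (hε : 0 ≤ ε) (hερ : ε ≤ ρ) (k : ℕ) :
    ε * ρ ^ k ≤ ρ ^ (k + 1) - (ρ - ε) ^ (k + 1) := by
  have : (ρ - ε) ^ k ≤ ρ ^ k := pow_le_pow_left₀ (by linarith) (by linarith) k
  rw [pow_succ, pow_succ]
  nlinarith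

namespace Metric

open Module

variable {E : Type*} [NormedAddCommGroup E] [NormedSpace ℝ E]

theorem IsCover.closedBall_diff_ball_subset_biUnion_closedBall {ρ : ℝ} {ε : ℝ≥0}
    (hερ : ε < ρ) {N : Set E} (hN : IsCover ε (sphere 0 ρ) N) :
    closedBall 0 ρ \ ball 0 (ρ - ε) ⊆ ⋃ s ∈ N, closedBall s (2 * ε) := by
  rintro y ⟨hyρ, hyε⟩
  rw [mem_closedBall_zero_iff] at hyρ
  rw [mem_ball_zero_iff, not_lt] at hyε
  have hy : 0 < ‖y‖ := by linarith
  set p : E := (ρ / ‖y‖) • y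
  have hp : p ∈ sphere 0 ρ := by
    rw [mem_sphere_zero_iff_norm, norm_smul,
      Real.norm_of_nonneg (div_nonneg (by linarith [ε.coe_nonneg]) hy.le), div_mul_cancel₀ _ hy.ne']
  have hyp : dist y p ≤ ε := by
    have : y - p = (1 - ρ / ‖y‖) • y := by rw [sub_smul, one_smul]
    rw [dist_eq_norm, this, norm_smul, Real.norm_eq_abs, ← abs_norm y, ← abs_mul, sub_mul, one_mul,
      abs_norm, div_mul_cancel₀ _ hy.ne', abs_le]
    constructor <;> linarith
  obtain ⟨s, hs, hps⟩ := mem_iUnion₂.mp (isCover_iff_subset_iUnion_closedBall.mp hN hp)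
  refine mem_iUnion₂.mpr ⟨s, hs, ?_⟩
  rw [mem_closedBall] at hps ⊢
  linarith [dist_triangle y p s]

variable [FiniteDimensional ℝ E]

theorem IsCover.pow_sub_pow_le_card_mul_pow {ρ : ℝ} {ε : ℝ≥0} (hερ : ε < ρ) {N : Finset E}
    (hN : IsCover ε (sphere 0 ρ) (N : Set E)) :
    ρ ^ finrank ℝ E - (ρ - ε) ^ finrank ℝ E ≤ N.card * (2 * ε) ^ finrank ℝ E := by
  borelize E
  set μ : Measure E := Measure.addHaar
  have hsub : ball (0 : E) (ρ - ε) ⊆ closedBall 0 ρ :=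
    ball_subset_closedBall.trans (closedBall_subset_closedBall (by linarith))
  have hannulus : μ (closedBall 0 ρ \ ball 0 (ρ - ε)) =
      ENNReal.ofReal (ρ ^ finrank ℝ E - (ρ - ε) ^ finrank ℝ E) * μ (ball 0 1) := by
    rw [measure_sdiff hsub measurableSet_ball.nullMeasurableSet measure_ball_lt_top.ne,
      μ.addHaar_closedBall _ (by linarith [ε.coe_nonneg]),
      μ.addHaar_ball_of_pos _ (r := ρ - ε) (by linarith),
      ENNReal.ofReal_sub _ (by positivity), ENNReal.sub_mul fun _ _ => measure_ball_lt_top.ne]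
  have hcover : μ (closedBall 0 ρ \ ball 0 (ρ - ε)) ≤
      ENNReal.ofReal (N.card * (2 * ε) ^ finrank ℝ E) * μ (ball 0 1) := by
    calc _ ≤ μ (⋃ s ∈ N, closedBall s (2 * ε)) :=
          measure_mono (hN.closedBall_diff_ball_subset_biUnion_closedBall hερ)
      _ ≤ ∑ s ∈ N, μ (closedBall s (2 * ε)) := measure_biUnion_finset_le N _
      _ = _ := by
        simp only [μ.addHaar_closedBall _ (by positivity : (0 : ℝ) ≤ 2 * ε), Finset.sum_const,
          nsmul_eq_mul, ENNReal.ofReal_mul (Nat.cast_nonneg _), ENNReal.ofReal_natCast, mul_assoc]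
  rw [hannulus, ENNReal.mul_le_mul_iff_left (measure_ball_pos μ 0 one_pos).ne'
    measure_ball_lt_top.ne, ENNReal.ofReal_le_ofReal_iff (by positivity)] at hcover
  exact hcover

end Metric

section OrthogonalGroup

variable {n : ℕ}

instance : BorelSpace (Matrix (Fin n) (Fin n) ℝ) := Pi.borelSpace

instance : ContinuousSMul (On n) (En n) where
  continuous_smul := (PiLp.continuous_toLp 2 _).comp <|
    (continuous_subtype_val.comp continuous_fst).matrix_mulVec
      ((PiLp.continuous_ofLp 2 _).comp continuous_snd)

theorem toEuclideanCLM_mem_unitary (g : On n) :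
    Matrix.toEuclideanCLM (n := Fin n) (𝕜 := ℝ) g ∈ unitary (En n →L[ℝ] En n) :=
  Unitary.map_mem _ g.2

instance : IsIsometricSMul (On n) (En n) where
  isometry_smul g := AddMonoidHomClass.isometry_of_norm _ fun v =>
    Unitary.norm_map ⟨_, toEuclideanCLM_mem_unitary g⟩ v

theorem exists_smul_eq_linearIsometryEquiv (φ : En n ≃ₗᵢ[ℝ] En n) :
    ∃ g : On n, ∀ v, g • v = φ v := by
  let e := Matrix.toEuclideanCLM (n := Fin n) (𝕜 := ℝ)
  let u := Unitary.linearIsometryEquiv.symm φ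
  refine ⟨⟨e.symm u, Unitary.map_mem e.symm u.2⟩, fun v => ?_⟩
  change e (e.symm u) v = φ v
  simp [u]

theorem sphere_subset_orbit (z : En n) : sphere 0 ‖z‖ ⊆ MulAction.orbit (On n) z := by
  intro y hy
  rw [mem_sphere_zero_iff_norm] at hy
  obtain ⟨g, hg⟩ := exists_smul_eq_linearIsometryEquiv (Submodule.reflection (ℝ ∙ (z - y))ᗮ)
  exact ⟨g, by simp only [hg]; exact Submodule.reflection_sub hy.symm⟩

end OrthogonalGroup

theorem ENNReal.le_ofReal_div_of_natCast_mul_le_one {m : ℝ≥0∞} {N : ℕ} {a b : ℝ} (ha : 0 < a)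
    (hm : N * m ≤ 1) (hN : a ≤ N * b) : m ≤ ENNReal.ofReal (b / a) := by
  rw [ENNReal.ofReal_div_of_pos ha, ENNReal.le_div_iff_mul_le (by simp [ha]) (by simp)]
  calc m * ENNReal.ofReal a ≤ m * ENNReal.ofReal (N * b) := by gcongr
    _ = N * m * ENNReal.ofReal b := by
        rw [ENNReal.ofReal_mul (Nat.cast_nonneg _), ENNReal.ofReal_natCast]; ring
    _ ≤ 1 * ENNReal.ofReal b := by gcongr
    _ = ENNReal.ofReal b := one_mul _

theorem orthogonalGroup_measure_dist_smul_self_lt_le {k : ℕ} (θ : Measure (On (k + 1)))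
    [θ.IsMulLeftInvariant] [IsProbabilityMeasure θ] {z : En (k + 1)} {r : ℝ} (hr : 0 < r)
    (hrz : 4 * r < ‖z‖) :
    θ {g | dist z (g • z) < 2 * r} ≤ ENNReal.ofReal (2 * 8 ^ k * (r / ‖z‖) ^ k) := by
  set ρ := ‖z‖
  have hρ : 0 < ρ := by linarith
  set δ : ℝ≥0 := ⟨2 * r, by positivity⟩
  have hδ : (δ : ℝ) = 2 * r := rfl
  have h2δ : ((2 * δ : ℝ≥0) : ℝ) = 4 * r := by push_cast [hδ]; ring
  set S := maximalSeparatedSet (2 * δ) (sphere (0 : En (k + 1)) ρ)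
  have hpack : packingNumber (2 * δ) (sphere (0 : En (k + 1)) ρ) ≠ ⊤ :=
    packingNumber_ne_top_of_totallyBounded
      (mul_ne_zero two_ne_zero (NNReal.coe_ne_zero.mp (by rw [hδ]; positivity)))
      (isCompact_sphere 0 ρ).totallyBounded
  have hfin : S.Finite := finite_maximalSeparatedSet hpack
  have hcard : (hfin.toFinset.card : ℝ≥0∞) * θ {g | dist z (g • z) < δ} ≤ 1 :=
    card_mul_measure_dist_smul_self_lt_le_one θ
      (by simpa using maximalSeparatedSet_subset.trans (sphere_subset_orbit z))
      (by simpa [S] using isSeparated_maximalSeparatedSet (ε := 2 * δ))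
  have hvol := IsCover.pow_sub_pow_le_card_mul_pow (N := hfin.toFinset) (by rw [h2δ]; linarith)
    (by simpa using isCover_maximalSeparatedSet hpack)
  rw [finrank_euclideanSpace_fin, h2δ] at hvol
  have hlow := mul_pow_le_pow_succ_sub_pow_succ (ε := 4 * r) (ρ := ρ) (by positivity) hrz.le k
  calc θ {g | dist z (g • z) < δ}
      ≤ ENNReal.ofReal ((2 * (4 * r)) ^ (k + 1) / (4 * r * ρ ^ k)) :=
        ENNReal.le_ofReal_div_of_natCast_mul_le_one (mul_pos (by positivity) (pow_pos hρ k))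
          hcard (hlow.trans hvol)
    _ = ENNReal.ofReal (2 * 8 ^ k * (r / ρ) ^ k) := by
        congr 1
        rw [div_pow]
        field_simp
        ring

theorem orthogonalGroup_measure_dist_smul_lt_le {k : ℕ} (θ : Measure (On (k + 1)))
    [θ.IsMulLeftInvariant] [IsProbabilityMeasure θ] (x : En (k + 1)) {z : En (k + 1)}
    (hz : z ≠ 0) {r : ℝ} (hr : 0 < r) :
    θ {g | dist x (g • z) < r} ≤ ENNReal.ofReal (2 * 8 ^ k * (r / ‖z‖) ^ k) := by
  rcases le_or_gt ‖z‖ (4 * r) with hrz | hrz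
  · have hρ : 0 < ‖z‖ := norm_pos_iff.mpr hz
    have : 1 ≤ 8 * (r / ‖z‖) := by rw [mul_div_assoc', le_div_iff₀ hρ]; linarith
    refine prob_le_one.trans (ENNReal.one_le_ofReal.mpr ?_)
    calc (1 : ℝ) ≤ 2 * (8 * (r / ‖z‖)) ^ k := by nlinarith [one_le_pow₀ (n := k) this]
      _ = 2 * 8 ^ k * (r / ‖z‖) ^ k := by ring
  · exact (measure_dist_smul_lt_le_measure_dist_smul_self_lt θ x z r).trans
      (orthogonalGroup_measure_dist_smul_self_lt_le θ hr hrz)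

/-- For all `x, z ∈ ℝⁿ` with `z ≠ 0` and `r > 0`, the Haar probability measure `θₙ` on `O(n)`
satisfies `θₙ {g : |x - g z| < r} ≤ C (r/|z|)^(n-1)` with `C = C(n)`. -/
theorem stmt0 (n : ℕ) (θ : Measure (On n)) [θ.IsHaarMeasure] [IsProbabilityMeasure θ] :
    ∃ C : ℝ≥0∞, C ≠ ∞ ∧ ∀ (x z : En n), z ≠ 0 → ∀ r : ℝ, 0 < r →
      θ {g : On n | ‖x - act g z‖ < r} ≤ C * ENNReal.ofReal (r / ‖z‖) ^ (n - 1) := by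
  cases n with
  | zero => exact ⟨1, ENNReal.one_ne_top, fun x z hz => absurd (Subsingleton.elim z 0) hz⟩
  | succ k =>
    refine ⟨ENNReal.ofReal (2 * 8 ^ k), ENNReal.ofReal_ne_top, fun x z hz r hr => ?_⟩
    rw [Nat.add_sub_cancel, ← ENNReal.ofReal_pow (by positivity),
      ← ENNReal.ofReal_mul (by positivity)]
    have h := orthogonalGroup_measure_dist_smul_lt_le θ x hz hr
    simp only [dist_eq_norm] at h
    exact h
end
end

section
/- Let A, B ⊂ ℝⁿ be Borel sets and g ∈ O(n) a fixed orthogonal transformation, and suppose dim_H(A × B) ≥ n. Then for Lebesgue-almost every z ∈ ℝⁿ, dim_H(A ∩ (g(B) + z)) ≤ dim_H(A × B) − n. -/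
open MeasureTheory Metric Set Function
open scoped ENNReal NNReal Topology

noncomputable section

/-! Cover a set `s` with `μH[t + n] s = 0` by sets `U` with `∑ diam U ^ (t + n)` small. The
slice of `U` over `z` along a `K`-Lipschitz map `f` into `ℝⁿ` is nonempty only for `z ∈ f '' U`,
a set of Lebesgue measure at most `(K diam U) ^ n`. Hence the covering sums `∑ diam U ^ t` of the
slices have integral at most `K ^ n ∑ diam U ^ (t + n)`, and by Fatou's lemma over ever finer
covers almost every slice is `μH[t]`-null. For the theorem, `f (x, y) = x - y` slices
`A × g(B)` into the sets `A ∩ (g(B) + z)`, up to the `1`-Lipschitz projection `(x, y) ↦ x`. -/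

open Filter

lemma isometry_act {n : ℕ} (g : On n) : Isometry (act g) := by
  have hg : Matrix.toEuclideanCLM (n := Fin n) (𝕜 := ℝ) (g : Matrix (Fin n) (Fin n) ℝ) ∈
      unitary _ := Unitary.map_mem _ g.2
  exact AddMonoidHomClass.isometry_of_norm (Matrix.toEuclideanLin (g : Matrix (Fin n) (Fin n) ℝ))
    fun x => ContinuousLinearMap.norm_map_of_mem_unitary hg x

lemma EuclideanSpace.volume_le_ediam_pow {ι : Type*} [Fintype ι]
    (s : Set (EuclideanSpace ℝ ι)) : volume s ≤ ediam s ^ Fintype.card ι := by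
  have hvol : volume s = volume (WithLp.ofLp '' s) := by
    rw [← (EuclideanSpace.volume_preserving_symm_measurableEquiv_toLp ι).measure_preimage_equiv]
    congr 1
    exact ((MeasurableEquiv.toLp 2 (ι → ℝ)).symm.preimage_image s).symm
  calc volume s = volume (WithLp.ofLp '' s) := hvol
    _ ≤ ediam (WithLp.ofLp '' s) ^ Fintype.card ι := Real.volume_pi_le_diam_pow _
    _ ≤ ediam s ^ Fintype.card ι := by
      gcongr
      simpa using (PiLp.lipschitzWith_ofLp 2 fun _ : ι => ℝ).ediam_image_le s

lemma exists_cover_tsum_ediam_rpow_le_of_hausdorffMeasure_eq_zero {X : Type*} [EMetricSpace X]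
    [MeasurableSpace X] [BorelSpace X] {s : Set X} {d : ℝ} (hd : 0 < d) (hs : μH[d] s = 0)
    {r ε : ℝ≥0∞} (hr : 0 < r) (hε : 0 < ε) :
    ∃ t : ℕ → Set X, s ⊆ ⋃ i, t i ∧ (∀ i, ediam (t i) ≤ r) ∧ ∑' i, ediam (t i) ^ d ≤ ε := by
  rw [Measure.hausdorffMeasure_apply, ENNReal.iSup_eq_zero] at hs
  have hlt := (hs r).symm ▸ hε
  simp only [iSup_pos hr, iInf_lt_iff] at hlt
  obtain ⟨t, hst, htr, hsum⟩ := hlt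
  refine ⟨t, hst, htr, le_of_eq_of_le (tsum_congr fun i => ?_) hsum.le⟩
  rcases (t i).eq_empty_or_nonempty with hti | hti
  · simp [hti, ENNReal.zero_rpow_of_pos hd]
  · rw [iSup_pos hti]

lemma ediam_inter_preimage_singleton_rpow_le_indicator {X Y : Type*} [EMetricSpace X]
    [EMetricSpace Y] (f : X → Y) (U : Set X) (y : Y) {t : ℝ} (ht : 0 < t) :
    ediam (U ∩ f ⁻¹' {y}) ^ t ≤ (closure (f '' U)).indicator (fun _ => ediam U ^ t) y := by
  rcases (U ∩ f ⁻¹' {y}).eq_empty_or_nonempty with hempty | ⟨x, hxU, hxy⟩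
  · simp [hempty, ENNReal.zero_rpow_of_pos ht]
  · rw [← hxy, indicator_of_mem (subset_closure (mem_image_of_mem f hxU))]
    gcongr
    exact inter_subset_left

lemma LipschitzWith.lintegral_indicator_closure_image_le {X ι : Type*} [EMetricSpace X]
    [Fintype ι] {K : ℝ≥0} {f : X → EuclideanSpace ℝ ι} (hf : LipschitzWith K f) (U : Set X)
    {t : ℝ} (ht : 0 ≤ t) :
    ∫⁻ y, (closure (f '' U)).indicator (fun _ => ediam U ^ t) y ≤
      (K : ℝ≥0∞) ^ Fintype.card ι * ediam U ^ (t + Fintype.card ι) := by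
  rw [lintegral_indicator_const isClosed_closure.measurableSet,
    ENNReal.rpow_add_of_nonneg _ _ ht (Nat.cast_nonneg _), ENNReal.rpow_natCast]
  calc ediam U ^ t * volume (closure (f '' U))
      ≤ ediam U ^ t * ((K : ℝ≥0∞) * ediam U) ^ Fintype.card ι := by
        gcongr
        calc volume (closure (f '' U)) ≤ ediam (closure (f '' U)) ^ Fintype.card ι :=
              EuclideanSpace.volume_le_ediam_pow _
          _ ≤ ((K : ℝ≥0∞) * ediam U) ^ Fintype.card ι := by
              rw [Metric.ediam_closure]
              gcongr
              exact hf.ediam_image_le U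
    _ = (K : ℝ≥0∞) ^ Fintype.card ι * (ediam U ^ t * ediam U ^ Fintype.card ι) := by ring

lemma LipschitzWith.lintegral_tsum_indicator_closure_image_le {X ι : Type*} [EMetricSpace X]
    [Fintype ι] {K : ℝ≥0} {f : X → EuclideanSpace ℝ ι} (hf : LipschitzWith K f)
    (U : ℕ → Set X) {t : ℝ} (ht : 0 ≤ t) :
    ∫⁻ y, ∑' i, (closure (f '' U i)).indicator (fun _ => ediam (U i) ^ t) y ≤
      (K : ℝ≥0∞) ^ Fintype.card ι * ∑' i, ediam (U i) ^ (t + Fintype.card ι) := by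
  rw [lintegral_tsum fun i =>
    (measurable_const.indicator isClosed_closure.measurableSet).aemeasurable,
    ← ENNReal.tsum_mul_left]
  exact ENNReal.tsum_le_tsum fun i => hf.lintegral_indicator_closure_image_le (U i) ht

theorem LipschitzWith.ae_hausdorffMeasure_inter_preimage_singleton_eq_zero {X ι : Type*}
    [EMetricSpace X] [MeasurableSpace X] [BorelSpace X] [Fintype ι] {K : ℝ≥0}
    {f : X → EuclideanSpace ℝ ι} (hf : LipschitzWith K f) {s : Set X} {t : ℝ} (ht : 0 < t)
    (hs : μH[t + Fintype.card ι] s = 0) :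
    ∀ᵐ y, μH[t] (s ∩ f ⁻¹' {y}) = 0 := by
  have htn : 0 < t + Fintype.card ι := by positivity
  choose U hsU hUdiam hUsum using fun m : ℕ =>
    exists_cover_tsum_ediam_rpow_le_of_hausdorffMeasure_eq_zero htn hs
      (r := (m : ℝ≥0∞)⁻¹) (ε := (m : ℝ≥0∞)⁻¹) (by simp) (by simp)
  set F : ℕ → EuclideanSpace ℝ ι → ℝ≥0∞ := fun m y =>
    ∑' i, (closure (f '' U m i)).indicator (fun _ => ediam (U m i) ^ t) y
  have hF : ∀ m, Measurable (F m) := fun m =>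
    Measurable.tsum fun i => measurable_const.indicator isClosed_closure.measurableSet
  have hslice : ∀ y, μH[t] (s ∩ f ⁻¹' {y}) ≤ liminf (fun m => F m y) atTop := by
    intro y
    refine (Measure.hausdorffMeasure_le_liminf_tsum t _ _ ENNReal.tendsto_inv_nat_nhds_zero
      (fun m i => U m i ∩ f ⁻¹' {y}) (Eventually.of_forall fun m i =>
        (ediam_mono inter_subset_left).trans (hUdiam m i))
      (Eventually.of_forall fun m => ?_)).trans ?_
    · rw [← iUnion_inter]
      exact inter_subset_inter_left _ (hsU m)
    · exact liminf_le_liminf (Eventually.of_forall fun m => ENNReal.tsum_le_tsum fun i =>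
        ediam_inter_preimage_singleton_rpow_le_indicator f _ y ht)
  have hFint : ∀ m, ∫⁻ y, F m y ≤ (K : ℝ≥0∞) ^ Fintype.card ι * (m : ℝ≥0∞)⁻¹ := fun m =>
    (hf.lintegral_tsum_indicator_closure_image_le (U m) ht.le).trans (by gcongr; exact hUsum m)
  have hliminf : ∫⁻ y, liminf (fun m => F m y) atTop = 0 := by
    refine le_antisymm ((lintegral_liminf_le hF).trans ?_) zero_le
    have hlim : Tendsto (fun m : ℕ => (K : ℝ≥0∞) ^ Fintype.card ι * (m : ℝ≥0∞)⁻¹) atTop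
        (𝓝 0) := by
      simpa using ENNReal.Tendsto.const_mul ENNReal.tendsto_inv_nat_nhds_zero
        (Or.inr (ENNReal.pow_ne_top ENNReal.coe_ne_top))
    exact (liminf_le_liminf (Eventually.of_forall hFint)).trans hlim.liminf_eq.le
  filter_upwards [(lintegral_eq_zero_iff (Measurable.liminf hF)).1 hliminf] with y hy
  exact le_antisymm ((hslice y).trans hy.le) zero_le

lemma ae_le_of_forall_lt_coe_ae_le {α : Type*} [MeasurableSpace α] {μ : Measure α}
    {x : α → ℝ≥0∞} {D : ℝ≥0∞} (h : ∀ d : ℝ≥0, D < d → ∀ᵐ a ∂μ, x a ≤ d) :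
    ∀ᵐ a ∂μ, x a ≤ D := by
  rcases eq_or_ne D ⊤ with rfl | hD
  · exact ae_of_all _ fun _ => le_top
  obtain ⟨u, -, hDu, hu⟩ := exists_seq_strictAnti_tendsto D.toNNReal
  have hlt : ∀ k, D < u k := fun k => by
    simpa [ENNReal.coe_toNNReal hD] using ENNReal.coe_lt_coe.2 (hDu k)
  have hlim : Tendsto (fun k => (u k : ℝ≥0∞)) atTop (𝓝 D) := by
    simpa [ENNReal.coe_toNNReal hD] using ENNReal.tendsto_coe.2 hu
  filter_upwards [ae_all_iff.2 fun k => h (u k) (hlt k)] with a ha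
  exact ge_of_tendsto' hlim ha

theorem LipschitzWith.ae_dimH_inter_preimage_singleton_le {X ι : Type*} [EMetricSpace X]
    [MeasurableSpace X] [BorelSpace X] [Fintype ι] {K : ℝ≥0} {f : X → EuclideanSpace ℝ ι}
    (hf : LipschitzWith K f) (s : Set X) :
    ∀ᵐ y, dimH (s ∩ f ⁻¹' {y}) ≤ dimH s - Fintype.card ι := by
  refine ae_le_of_forall_lt_coe_ae_le fun d hd => ?_
  have hd0 : 0 < (d : ℝ) := by exact_mod_cast zero_le.trans_lt hd
  have hs : μH[d + Fintype.card ι] s = 0 := by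
    have := hausdorffMeasure_of_dimH_lt (d := d + Fintype.card ι)
      (by exact_mod_cast ENNReal.lt_add_of_sub_lt_right (Or.inr (by simp)) hd)
    exact_mod_cast this
  filter_upwards [hf.ae_hausdorffMeasure_inter_preimage_singleton_eq_zero hd0 hs] with y hy
  exact dimH_le_of_hausdorffMeasure_ne_top (by simp [hy])

lemma inter_image_add_eq_fst_image_inter_preimage_sub {G : Type*} [AddCommGroup G] (φ : G → G)
    (A B : Set G) (z : G) :
    A ∩ ((fun b => φ b + z) '' B) =
      Prod.fst '' ((A ×ˢ (φ '' B)) ∩ (fun p : G × G => p.1 - p.2) ⁻¹' {z}) := by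
  ext x
  simp only [mem_inter_iff, mem_image, mem_prod, mem_preimage, mem_singleton_iff, Prod.exists]
  constructor
  · rintro ⟨hxA, b, hb, rfl⟩
    exact ⟨φ b + z, φ b, ⟨⟨hxA, b, hb, rfl⟩, add_sub_cancel_left _ _⟩, rfl⟩
  · rintro ⟨_, _, ⟨⟨hxA, b, hb, rfl⟩, hz⟩, rfl⟩
    exact ⟨hxA, b, hb, by rw [← hz, add_sub_cancel]⟩

lemma Isometry.dimH_prod_image {X : Type*} [EMetricSpace X] {φ : X → X} (hφ : Isometry φ)
    (A B : Set X) : dimH (A ×ˢ (φ '' B)) = dimH (A ×ˢ B) := by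
  rw [← image_id A, prod_image_image_eq, image_id]
  exact (isometry_id.prodMap hφ).dimH_image _

theorem stmt1_general (n : ℕ) (A B : Set (En n))
    (g : On n) :
    ∀ᵐ z ∂(volume : Measure (En n)),
      dimH (A ∩ ((fun b => act g b + z) '' B)) ≤ dimH (A ×ˢ B) - n := by
  have hdiff : LipschitzWith (1 + 1) fun p : En n × En n => p.1 - p.2 :=
    LipschitzWith.prod_fst.sub LipschitzWith.prod_snd
  filter_upwards [hdiff.ae_dimH_inter_preimage_singleton_le (A ×ˢ (act g '' B))] with z hz
  rw [inter_image_add_eq_fst_image_inter_preimage_sub, ← (isometry_act g).dimH_prod_image]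
  simpa using (LipschitzWith.prod_fst.dimH_image_le _).trans hz

/-- For Borel `A, B ⊆ ℝⁿ` and fixed `g ∈ O(n)` with `dimH (A × B) ≥ n`, for a.e. `z`,
`dimH (A ∩ (g(B)+z)) ≤ dimH (A × B) - n`. -/
theorem stmt1 (n : ℕ) (A B : Set (En n)) (hA : MeasurableSet A) (hB : MeasurableSet B)
    (g : On n) (h : (n : ℝ≥0∞) ≤ dimH (A ×ˢ B)) :
    ∀ᵐ z ∂(volume : Measure (En n)),
      dimH (A ∩ ((fun b => act g b + z) '' B)) ≤ dimH (A ×ˢ B) - n :=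
  stmt1_general n A B g
end
end

section
/- For every 0 ≤ s ≤ 1 there exist compact sets A, B ⊂ ℝ with dim_H A = dim_H B = 1 such that for every z ∈ ℝ the intersection A ∩ (B + z) contains at most one point. -/
open MeasureTheory Metric Set Function
open scoped ENNReal NNReal Topology

noncomputable section

/-
Work with base-3 expansions and reserve a sparse set of digit positions: every perfect square
`m²` carries the digit `0`, and the position `m² + 2m` just before the next square is a "probe".
In `A` the probe of block `m` repeats the `(m-1)`-st free digit; in `B` all probes are `0`.
A point of `A ∩ (B + z)` gives `a + b' = a' + b` for some `a, a' ∈ A`, `b, b' ∈ B`; the zero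
after every probe keeps carries from crossing it, so the probes of `a` and `a'` agree, hence so do
all their free digits, and `a = a'`. Since the reserved positions have density `0`, forgetting
them is a map from `A` (or `B`) onto `[0, 1]` that is Hölder of every exponent `r < 1`, which
forces `dim_H = 1`.
-/

namespace Real

variable {b : ℕ}

def ofDigitsPrefix (α : ℕ → Fin b) : ℕ → ℕ
  | 0 => 0
  | n + 1 => b * ofDigitsPrefix α n + α n

lemma ofDigitsPrefix_succ_mod (α : ℕ → Fin b) (n : ℕ) : ofDigitsPrefix α (n + 1) % b = α n := by
  rw [ofDigitsPrefix, Nat.mul_add_mod, Nat.mod_eq_of_lt (α n).2]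

lemma eq_of_ofDigitsPrefix_eq {α α' : ℕ → Fin b} {n : ℕ}
    (h : ofDigitsPrefix α n = ofDigitsPrefix α' n) : ∀ i < n, α i = α' i := by
  induction n with
  | zero => simp
  | succ n ih =>
    have hlast : α n = α' n := Fin.ext <| by
      rw [← ofDigitsPrefix_succ_mod, ← ofDigitsPrefix_succ_mod, h]
    have hb : 0 < b := Fin.pos (α 0)
    have hinit : ofDigitsPrefix α n = ofDigitsPrefix α' n := by
      simp only [ofDigitsPrefix, hlast] at h
      exact Nat.eq_of_mul_eq_mul_left hb (Nat.add_right_cancel h)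
    intro i hi
    rcases Nat.lt_succ_iff_lt_or_eq.mp hi with hi | rfl
    exacts [ih hinit i hi, hlast]

lemma sum_ofDigitsTerm_range (α : ℕ → Fin b) (n : ℕ) :
    ∑ i ∈ Finset.range n, ofDigitsTerm α i = ofDigitsPrefix α n / (b : ℝ) ^ n := by
  have hb : (b : ℝ) ≠ 0 := by exact_mod_cast (Fin.pos (α 0)).ne'
  induction n with
  | zero => simp [ofDigitsPrefix]
  | succ n ih =>
    rw [Finset.sum_range_succ, ih, ofDigitsTerm, ofDigitsPrefix]
    push_cast
    field_simp
    ring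

lemma ofDigits_le_inv_of_head_eq_zero [NeZero b] {α : ℕ → Fin b} (hα : α 0 = 0) :
    ofDigits α ≤ (b : ℝ)⁻¹ := by
  rw [ofDigits_eq_sum_add_ofDigits α 1]
  simpa [ofDigitsTerm, hα] using mul_le_of_le_one_right (by positivity) (ofDigits_le_one _)

lemma pow_mul_ofDigits_sub_ofDigitsPrefix_mem [NeZero b] {α : ℕ → Fin b} {n : ℕ}
    (hα : α n = 0) : (b : ℝ) ^ n * ofDigits α - ofDigitsPrefix α n ∈ Icc 0 (b : ℝ)⁻¹ := by
  have hb : (b : ℝ) ^ n ≠ 0 := pow_ne_zero _ (Nat.cast_ne_zero.mpr (NeZero.ne b))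
  rw [ofDigits_eq_sum_add_ofDigits α n, sum_ofDigitsTerm_range, mul_add, mul_div_cancel₀ _ hb,
    mul_inv_cancel_left₀ hb, add_sub_cancel_left]
  exact ⟨ofDigits_nonneg _, ofDigits_le_inv_of_head_eq_zero (by simpa using hα)⟩

lemma inv_pow_succ_le_abs_ofDigits_sub [NeZero b] (hb : 2 ≤ b) {α α' : ℕ → Fin b} {n i : ℕ}
    (hα : α n = 0) (hα' : α' n = 0) (hi : i < n) (hne : α i ≠ α' i) :
    ((b : ℝ) ^ (n + 1))⁻¹ ≤ |ofDigits α - ofDigits α'| := by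
  obtain ⟨hu₀, hu₁⟩ := pow_mul_ofDigits_sub_ofDigitsPrefix_mem hα
  obtain ⟨hv₀, hv₁⟩ := pow_mul_ofDigits_sub_ofDigitsPrefix_mem hα'
  have hP : (ofDigitsPrefix α n : ℤ) ≠ ofDigitsPrefix α' n := fun h =>
    hne (eq_of_ofDigitsPrefix_eq (by exact_mod_cast h) i hi)
  have hgap : (1 : ℝ) ≤ |(ofDigitsPrefix α n : ℝ) - ofDigitsPrefix α' n| := by
    exact_mod_cast Int.one_le_abs (sub_ne_zero.mpr hP)
  have hbinv : (b : ℝ)⁻¹ ≤ 1 - (b : ℝ)⁻¹ := by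
    have : (2 : ℝ) ≤ b := by exact_mod_cast hb
    rw [le_sub_iff_add_le, ← two_mul, mul_inv_le_iff₀ (by linarith)]
    linarith
  have hpow : (0 : ℝ) < (b : ℝ) ^ n := by positivity
  have key : (b : ℝ)⁻¹ ≤ |(b : ℝ) ^ n * ofDigits α - (b : ℝ) ^ n * ofDigits α'| := by
    rw [le_abs] at hgap ⊢
    rcases hgap with hgap | hgap
    · left; linarith
    · right; linarith
  rw [← mul_sub, abs_mul, abs_of_pos hpow, ← div_le_iff₀' hpow] at key
  rwa [pow_succ, mul_inv, mul_comm, ← div_eq_mul_inv]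

lemma ofDigits_add_eq_add_modEq [NeZero b] (hb : 3 ≤ b) {α₁ α₂ β₁ β₂ : ℕ → Fin b} {n : ℕ}
    (hα₁ : α₁ (n + 1) = 0) (hα₂ : α₂ (n + 1) = 0) (hβ₁ : β₁ (n + 1) = 0) (hβ₂ : β₂ (n + 1) = 0)
    (h : ofDigits α₁ + ofDigits β₂ = ofDigits α₂ + ofDigits β₁) :
    (α₁ n : ℕ) + β₂ n ≡ α₂ n + β₁ n [MOD b] := by
  obtain ⟨u₁, u₁'⟩ := pow_mul_ofDigits_sub_ofDigitsPrefix_mem hα₁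
  obtain ⟨u₂, u₂'⟩ := pow_mul_ofDigits_sub_ofDigitsPrefix_mem hα₂
  obtain ⟨v₁, v₁'⟩ := pow_mul_ofDigits_sub_ofDigitsPrefix_mem hβ₁
  obtain ⟨v₂, v₂'⟩ := pow_mul_ofDigits_sub_ofDigitsPrefix_mem hβ₂
  have hb' : (b : ℝ)⁻¹ < 1 / 2 := by
    rw [inv_lt_comm₀ (by positivity) (by norm_num)]
    norm_num
    exact_mod_cast hb
  set m : ℤ := ofDigitsPrefix α₁ (n + 1) + ofDigitsPrefix β₂ (n + 1) -
    (ofDigitsPrefix α₂ (n + 1) + ofDigitsPrefix β₁ (n + 1)) with hm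
  -- the four fractional parts lie in `[0, 1/b]`, so `|m| ≤ 2/b < 1`
  have hm_abs : |(m : ℝ)| < 1 := by
    have hscaled := congrArg ((b : ℝ) ^ (n + 1) * ·) h
    simp only [mul_add] at hscaled
    rw [abs_lt]
    push_cast [hm]
    constructor <;> linarith
  have hm0 : m = 0 := Int.abs_lt_one_iff.mp (by exact_mod_cast hm_abs)
  have hsum : ofDigitsPrefix α₁ (n + 1) + ofDigitsPrefix β₂ (n + 1) =
      ofDigitsPrefix α₂ (n + 1) + ofDigitsPrefix β₁ (n + 1) := by
    omega
  unfold Nat.ModEq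
  rw [← ofDigitsPrefix_succ_mod α₁, ← ofDigitsPrefix_succ_mod β₂, ← ofDigitsPrefix_succ_mod α₂,
    ← ofDigitsPrefix_succ_mod β₁, ← Nat.add_mod, ← Nat.add_mod, hsum]

end Real

theorem dimH_image_le_div_of_edist_le {X Y Z : Type*} [EMetricSpace Y] [EMetricSpace Z]
    {f : X → Y} {h : X → Z} {s : Set X} {C r : ℝ≥0} (hr : 0 < r)
    (hfh : ∀ x ∈ s, ∀ y ∈ s, edist (h x) (h y) ≤ C * edist (f x) (f y) ^ (r : ℝ)) :
    dimH (h '' s) ≤ dimH (f '' s) / r := by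
  cases isEmpty_or_nonempty X
  · simp [Set.eq_empty_of_isEmpty s]
  set g : Y → Z := fun y => h (invFunOn f s y)
  have hg : HolderOnWith C r g (f '' s) := by
    rintro _ ⟨x, hx, rfl⟩ _ ⟨y, hy, rfl⟩
    obtain ⟨hx', hfx⟩ := invFunOn_pos (b := f x) ⟨x, hx, rfl⟩
    obtain ⟨hy', hfy⟩ := invFunOn_pos (b := f y) ⟨y, hy, rfl⟩
    simpa only [g, hfx, hfy] using hfh _ hx' _ hy'
  have himage : h '' s ⊆ g '' (f '' s) := by
    rintro _ ⟨x, hx, rfl⟩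
    refine ⟨f x, mem_image_of_mem f hx, ?_⟩
    obtain ⟨hx', hfx⟩ := invFunOn_pos (b := f x) ⟨x, hx, rfl⟩
    have := hfh _ hx' _ hx
    rw [hfx, edist_self, ENNReal.zero_rpow_of_pos (by exact_mod_cast hr), mul_zero,
      nonpos_iff_eq_zero, edist_eq_zero] at this
    exact this
  exact (dimH_mono himage).trans (hg.dimH_image_le hr)

namespace UniqueDifference

open Real

/-- Writing `n = m² + j` with `0 ≤ j ≤ 2m`: `j = 0` is a padding zero, `j = 2m` (for `m ≥ 1`) the
probe `q (m - 1)`, and the other positions carry `γ` in order, `γ t` sitting at `freePos t`. -/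
def layout (q γ : ℕ → Fin 3) (n : ℕ) : Fin 3 :=
  if n - n.sqrt * n.sqrt = 0 then 0
  else if n - n.sqrt * n.sqrt = 2 * n.sqrt then q (n.sqrt - 1)
  else γ (n - 2 * n.sqrt)

def freePos (t : ℕ) : ℕ := t + 2 * t.sqrt + 2

section

variable (q γ : ℕ → Fin 3)

lemma layout_mul_self (m : ℕ) : layout q γ (m * m) = 0 := by
  simp [layout, Nat.sqrt_eq]

lemma layout_probe (k : ℕ) : layout q γ ((k + 1) * (k + 1) + 2 * (k + 1)) = q k := by
  rw [layout, Nat.sqrt_add_eq _ (by omega)]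
  simp

lemma layout_freePos (t : ℕ) : layout q γ (freePos t) = γ t := by
  have hle := Nat.sqrt_le t
  have hlt := Nat.lt_succ_sqrt t
  have hsq : (t.sqrt + 1) * (t.sqrt + 1) = t.sqrt * t.sqrt + 2 * t.sqrt + 1 := by ring
  rw [Nat.succ_eq_add_one, hsq] at hlt
  have hpos : freePos t = (t.sqrt + 1) * (t.sqrt + 1) + (t - t.sqrt * t.sqrt + 1) := by
    rw [freePos, hsq]
    omega
  rw [layout, hpos, Nat.sqrt_add_eq _ (by omega), hsq, if_neg (by omega), if_neg (by omega)]
  congr 1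
  omega

end

lemma freePos_lt (t : ℕ) : freePos t < (t.sqrt + 2) * (t.sqrt + 2) := by
  have := Nat.lt_succ_sqrt t
  rw [Nat.succ_eq_add_one] at this
  rw [freePos, show (t.sqrt + 2) * (t.sqrt + 2) = (t.sqrt + 1) * (t.sqrt + 1) + 2 * t.sqrt + 3
    by ring]
  omega

lemma continuous_layout {X : Type*} [TopologicalSpace X] {q γ : X → ℕ → Fin 3}
    (hq : Continuous q) (hγ : Continuous γ) : Continuous fun x => layout (q x) (γ x) :=
  continuous_pi fun n => by
    unfold layout
    split_ifs
    exacts [continuous_const, (continuous_apply _).comp hq, (continuous_apply _).comp hγ]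

lemma mul_add_two_sq_le {r : ℝ} (hr : r < 1) (x : ℝ) : r * (x + 2) ^ 2 ≤ x ^ 2 + 4 / (1 - r) := by
  have hε : 0 < 1 - r := by linarith
  have : 0 ≤ ((1 - r) * (x + 2) - 2) ^ 2 / (1 - r) := by positivity
  rw [sub_sq, mul_pow] at this
  field_simp at this ⊢
  nlinarith

lemma abs_ofDigits_sub_le_rpow_layout (q : (ℕ → Fin 3) → ℕ → Fin 3) {r : ℝ} (hr₀ : 0 ≤ r)
    (hr₁ : r < 1) (γ γ' : ℕ → Fin 3) :
    |ofDigits γ - ofDigits γ'| ≤ (3 : ℝ) ^ (4 / (1 - r) + 1) *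
      |ofDigits (layout (q γ) γ) - ofDigits (layout (q γ') γ')| ^ r := by
  rcases eq_or_ne γ γ' with rfl | hne
  · simp only [sub_self, abs_zero]
    positivity
  have hex : ∃ t, γ t ≠ γ' t := by
    by_contra! h
    exact hne (funext h)
  classical
  set t := Nat.find hex
  have hagree : ∀ i < t, γ i = γ' i := fun i hi => not_not.mp (Nat.find_min hex hi)
  set s := t.sqrt
  have hupper : |ofDigits γ - ofDigits γ'| ≤ (3 : ℝ) ^ (-(t : ℝ)) := by
    simpa [Real.rpow_neg, Real.rpow_natCast] using abs_ofDigits_sub_ofDigits_le hagree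
  have hlower : (3 : ℝ) ^ (-((s + 2) * (s + 2) + 1 : ℕ) : ℝ) ≤
      |ofDigits (layout (q γ) γ) - ofDigits (layout (q γ') γ')| := by
    have hdiff : layout (q γ) γ (freePos t) ≠ layout (q γ') γ' (freePos t) := by
      rw [layout_freePos, layout_freePos]
      exact Nat.find_spec hex
    have := inv_pow_succ_le_abs_ofDigits_sub (b := 3) (by norm_num) (layout_mul_self _ _ _)
      (layout_mul_self _ _ _) (freePos_lt t) hdiff
    rw [Real.rpow_neg (by norm_num), Real.rpow_natCast]
    simpa using this
  -- `γ t` sits before the zero at `(s + 2)²`, which is only `O(√t)` positions after `t`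
  have hexp : r * ((s + 2) * (s + 2) + 1 : ℕ) ≤ t + (4 / (1 - r) + 1) := by
    have hst : ((s * s : ℕ) : ℝ) ≤ t := by exact_mod_cast Nat.sqrt_le t
    have := mul_add_two_sq_le hr₁ s
    push_cast at hst ⊢
    nlinarith
  calc |ofDigits γ - ofDigits γ'| ≤ (3 : ℝ) ^ (-(t : ℝ)) := hupper
    _ ≤ (3 : ℝ) ^ ((4 / (1 - r) + 1) + (-((s + 2) * (s + 2) + 1 : ℕ) : ℝ) * r) :=
        Real.rpow_le_rpow_of_exponent_le (by norm_num) (by linarith)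
    _ = (3 : ℝ) ^ (4 / (1 - r) + 1) * ((3 : ℝ) ^ (-((s + 2) * (s + 2) + 1 : ℕ) : ℝ)) ^ r := by
        rw [Real.rpow_add (by norm_num), Real.rpow_mul (by norm_num)]
    _ ≤ _ := by gcongr

def layoutSet (q : (ℕ → Fin 3) → ℕ → Fin 3) : Set ℝ :=
  range fun γ => ofDigits (layout (q γ) γ)

lemma isCompact_layoutSet {q : (ℕ → Fin 3) → ℕ → Fin 3} (hq : Continuous q) :
    IsCompact (layoutSet q) :=
  isCompact_range (continuous_ofDigits.comp (continuous_layout hq continuous_id))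

lemma dimH_layoutSet (q : (ℕ → Fin 3) → ℕ → Fin 3) : dimH (layoutSet q) = 1 := by
  refine le_antisymm (Real.dimH_univ ▸ dimH_mono (subset_univ _)) ?_
  refine ENNReal.le_of_forall_pos_nnreal_lt fun r hr₀ hr₁ => ?_
  have hr₁' : (r : ℝ) < 1 := by exact_mod_cast hr₁
  have hholder := dimH_image_le_div_of_edist_le (h := ofDigits) (s := univ)
    (f := fun γ => ofDigits (layout (q γ) γ))
    (C := ((3 : ℝ) ^ (4 / (1 - (r : ℝ)) + 1)).toNNReal) hr₀ fun γ _ γ' _ => by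
      rw [edist_dist, edist_dist, Real.dist_eq, Real.dist_eq,
        ENNReal.ofReal_rpow_of_nonneg (abs_nonneg _) r.coe_nonneg, ENNReal.ofNNReal_toNNReal,
        ← ENNReal.ofReal_mul (by positivity)]
      exact ENNReal.ofReal_le_ofReal (abs_ofDigits_sub_le_rpow_layout q r.coe_nonneg hr₁' γ γ')
  have hone : 1 ≤ dimH (ofDigits '' (univ : Set (ℕ → Fin 3))) := by
    calc (1 : ℝ≥0∞) = dimH (Icc (0 : ℝ) 1) := by
          rw [Real.dimH_of_nonempty_interior (by simp), Module.finrank_self, Nat.cast_one]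
      _ ≤ _ := dimH_mono (ofDigits_SurjOn (by norm_num))
  have := hone.trans hholder
  rw [image_univ] at this
  rwa [ENNReal.le_div_iff_mul_le (.inl (by simpa using hr₀.ne')) (.inl (by simp)), one_mul] at this

lemma eq_of_ofDigits_layout_add_eq {γ₁ γ₂ δ₁ δ₂ : ℕ → Fin 3}
    (h : ofDigits (layout γ₁ γ₁) + ofDigits (layout 0 δ₂) =
      ofDigits (layout γ₂ γ₂) + ofDigits (layout 0 δ₁)) : γ₁ = γ₂ := by
  funext k
  have hzero : ∀ q γ, layout q γ ((k + 1) * (k + 1) + 2 * (k + 1) + 1) = 0 := fun q γ => by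
    rw [show (k + 1) * (k + 1) + 2 * (k + 1) + 1 = (k + 2) * (k + 2) by ring]
    exact layout_mul_self q γ _
  have := ofDigits_add_eq_add_modEq (by norm_num) (hzero _ _) (hzero _ _) (hzero _ _) (hzero _ _) h
  simp only [layout_probe, Pi.zero_apply, Fin.val_zero, add_zero] at this
  exact Fin.ext (by simpa [Nat.ModEq, Nat.mod_eq_of_lt] using this)

lemma layoutSet_inter_translate_subsingleton (z : ℝ) :
    (layoutSet id ∩ (fun b => b + z) '' layoutSet fun _ => 0).Subsingleton := by
  rintro _ ⟨⟨γ₁, rfl⟩, _, ⟨δ₁, rfl⟩, h₁⟩ _ ⟨⟨γ₂, rfl⟩, _, ⟨δ₂, rfl⟩, h₂⟩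
  dsimp only [id] at h₁ h₂ ⊢
  obtain rfl : γ₁ = γ₂ := eq_of_ofDigits_layout_add_eq (δ₁ := δ₁) (δ₂ := δ₂) (by linarith)
  rfl

end UniqueDifference

theorem stmt3_general :
    ∃ A B : Set ℝ, IsCompact A ∧ IsCompact B ∧ dimH A = 1 ∧ dimH B = 1 ∧
      ∀ z : ℝ, (A ∩ ((fun b => b + z) '' B)).Subsingleton :=
  ⟨_, _, UniqueDifference.isCompact_layoutSet continuous_id,
    UniqueDifference.isCompact_layoutSet continuous_const, UniqueDifference.dimH_layoutSet _,
    UniqueDifference.dimH_layoutSet _, UniqueDifference.layoutSet_inter_translate_subsingleton⟩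

/-- For every `0 ≤ s ≤ 1` there are compact `A, B ⊆ ℝ` of Hausdorff dimension 1 such that
`A ∩ (B + z)` contains at most one point for every `z`. -/
theorem stmt3 (s : ℝ) (h0 : 0 ≤ s) (h1 : s ≤ 1) :
    ∃ A B : Set ℝ, IsCompact A ∧ IsCompact B ∧ dimH A = 1 ∧ dimH B = 1 ∧
      ∀ z : ℝ, (A ∩ ((fun b => b + z) '' B)).Subsingleton :=
  stmt3_general
end
end

section
/- Let μ be a finite compactly supported Borel measure on ℝⁿ and 0 < s < n. Then I_s(μ) = c(n,s) ∫_{ℝⁿ} |μ̂(x)|² |x|^{s−n} dx, where c(n,s) > 0 is a constant depending only on n and s. -/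
/-!
Both sides are superpositions of Gaussians. The Gamma integral
`Γ(a) π^{-a} |z|^{-2a} = ∫₀^∞ t^{a-1} e^{-π t |z|²} dt` with `a = s/2` writes the `s`-energy
as an integral over `t > 0` of the Gaussian energies `∬ e^{-π t |x-y|²} dμ dμ`. For each of
these, Fubini and the Fourier transform of the Gaussian give
`t^{n/2} ∬ e^{-π t |x-y|²} dμ dμ = ∫ |μ̂(ξ)|² e^{-π |ξ|² / t} dξ`. Integrating back in `t`
and using the same Gamma integral in the variable `1/t`, now with `a = (n-s)/2`, produces
`|ξ|^{s-n}`; hence `c(n,s) = π^{s-n/2} Γ((n-s)/2) / Γ(s/2)`. The interchanges with the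
`t`-integral are Tonelli's, so nothing is assumed about the finiteness of either side; the
only oscillatory Fubini step is absolutely convergent because `μ` is finite.
-/

open MeasureTheory Metric Set Function
open scoped ENNReal NNReal Topology

noncomputable section

/-- The `s`-energy `I_s(μ) = ∬ |x-y|^{-s} dμ dμ`. -/
def energy {n : ℕ} (μ : Measure (En n)) (s : ℝ) : ℝ≥0∞ :=
  ∫⁻ x, ∫⁻ y, (‖x - y‖₊ : ℝ≥0∞) ^ (-s) ∂μ ∂μ

/-- The Fourier transform `μ̂(ξ) = ∫ e^{-2πi x·ξ} dμ(x)` of a measure. -/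
def ft {n : ℕ} (μ : Measure (En n)) (ξ : En n) : ℂ :=
  ∫ x, Complex.exp ((-2 * Real.pi * Complex.I) * ((inner ℝ x ξ : ℝ) : ℂ)) ∂μ

/-- The spherical average `σ(μ)(r) = r^{1-n} ∫_{S(r)} |μ̂|² dσ_r^{n-1}`, written via the
parametrization of `S(r)` by the unit sphere (with its surface measure `volume.toSphere`). -/
def sphAvg {n : ℕ} (μ : Measure (En n)) (r : ℝ) : ℝ≥0∞ :=
  ∫⁻ v, (‖ft μ (r • (v : En n))‖₊ : ℝ≥0∞) ^ 2 ∂((volume : Measure (En n)).toSphere)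

open Real

lemma lintegral_Ioi_comp_inv (g : ℝ → ℝ≥0∞) :
    ∫⁻ t in Ioi 0, ENNReal.ofReal (t ^ 2)⁻¹ * g t⁻¹ = ∫⁻ t in Ioi 0, g t := by
  have himage : Inv.inv '' Ioi (0 : ℝ) = Ioi 0 := by
    ext t; simp
  conv_rhs => rw [← himage]
  rw [lintegral_image_eq_lintegral_abs_deriv_mul measurableSet_Ioi
    (fun t ht => (hasDerivAt_inv (ne_of_gt ht)).hasDerivWithinAt) inv_injective.injOn g]
  simp only [abs_neg, abs_inv, abs_pow, sq_abs]

lemma lintegral_rpow_Ioi_eq_top (a : ℝ) :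
    ∫⁻ t in Ioi 0, ENNReal.ofReal (t ^ a) = ∞ := by
  by_contra h
  refine not_integrableOn_Ioi_rpow a ((lintegral_ofReal_ne_top_iff_integrable ?_ ?_).mp h)
  · fun_prop
  · filter_upwards [ae_restrict_mem measurableSet_Ioi] with t ht using rpow_nonneg ht.le a

lemma lintegral_rpow_mul_exp_neg_mul_Ioi {a c : ℝ} (ha : 0 < a) (hc : 0 ≤ c) :
    ∫⁻ t in Ioi 0, ENNReal.ofReal (t ^ (a - 1) * rexp (-(c * t)))
      = ENNReal.ofReal (Gamma a) * ENNReal.ofReal c ^ (-a) := by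
  rcases hc.eq_or_lt with rfl | hc
  -- At `c = 0` both sides are `∞`, since `ENNReal.ofReal 0 ^ (-a) = ∞`.
  · simp [lintegral_rpow_Ioi_eq_top, ENNReal.zero_rpow_of_neg (neg_neg_of_pos ha),
      Gamma_pos_of_pos ha]
  · have hint : IntegrableOn (fun t : ℝ => t ^ (a - 1) * rexp (-(c * t))) (Ioi 0) := by
      simpa using integrableOn_rpow_mul_exp_neg_mul_rpow (p := 1) (by linarith) one_pos hc
    rw [← ofReal_integral_eq_lintegral_ofReal hint, integral_rpow_mul_exp_neg_mul_Ioi ha hc,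
      mul_comm, ENNReal.ofReal_mul (by positivity), one_div, inv_rpow hc.le, ← rpow_neg hc.le,
      ENNReal.ofReal_rpow_of_pos hc]
    filter_upwards [ae_restrict_mem measurableSet_Ioi] with t ht
    exact mul_nonneg (rpow_nonneg ht.le _) (exp_pos _).le

lemma lintegral_rpow_mul_exp_neg_div_Ioi {a c : ℝ} (ha : 0 < a) (hc : 0 ≤ c) :
    ∫⁻ t in Ioi 0, ENNReal.ofReal (t ^ (-a - 1) * rexp (-(c / t)))
      = ENNReal.ofReal (Gamma a) * ENNReal.ofReal c ^ (-a) := by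
  rw [← lintegral_rpow_mul_exp_neg_mul_Ioi ha hc, ← lintegral_Ioi_comp_inv]
  refine setLIntegral_congr_fun measurableSet_Ioi fun t (ht : 0 < t) => ?_
  rw [← ENNReal.ofReal_mul (by positivity), div_inv_eq_mul, inv_rpow ht.le, ← rpow_neg ht.le,
    ← mul_assoc, ← rpow_two, ← rpow_neg ht.le, ← rpow_add ht]
  ring_nf

section RieszKernel

variable {E : Type*} [NormedAddCommGroup E]

lemma ofReal_Gamma_mul_ofReal_pi_mul_sq_norm_rpow (a : ℝ) (z : E) :
    ENNReal.ofReal (Gamma a) * ENNReal.ofReal (π * ‖z‖ ^ 2) ^ (-a)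
      = ENNReal.ofReal (π ^ (-a) * Gamma a) * (‖z‖₊ : ℝ≥0∞) ^ (-(2 * a)) := by
  rw [ENNReal.ofReal_mul pi_pos.le, ENNReal.ofReal_pow (norm_nonneg z), ofReal_norm,
    ENNReal.mul_rpow_of_ne_top ENNReal.ofReal_ne_top (ENNReal.pow_ne_top enorm_ne_top),
    ENNReal.ofReal_rpow_of_pos pi_pos, ← ENNReal.rpow_two, ← ENNReal.rpow_mul,
    ENNReal.ofReal_mul (rpow_nonneg pi_pos.le _), enorm_eq_nnnorm]
  ring_nf

lemma lintegral_rpow_mul_exp_neg_pi_sq_norm_mul {a : ℝ} (ha : 0 < a) (z : E) :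
    ∫⁻ t in Ioi 0, ENNReal.ofReal (t ^ (a - 1) * rexp (-(π * ‖z‖ ^ 2 * t)))
      = ENNReal.ofReal (π ^ (-a) * Gamma a) * (‖z‖₊ : ℝ≥0∞) ^ (-(2 * a)) := by
  rw [lintegral_rpow_mul_exp_neg_mul_Ioi ha (by positivity),
    ofReal_Gamma_mul_ofReal_pi_mul_sq_norm_rpow]

lemma lintegral_rpow_mul_exp_neg_pi_sq_norm_div {a : ℝ} (ha : 0 < a) (z : E) :
    ∫⁻ t in Ioi 0, ENNReal.ofReal (t ^ (-a - 1) * rexp (-(π * ‖z‖ ^ 2 / t)))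
      = ENNReal.ofReal (π ^ (-a) * Gamma a) * (‖z‖₊ : ℝ≥0∞) ^ (-(2 * a)) := by
  rw [lintegral_rpow_mul_exp_neg_div_Ioi ha (by positivity),
    ofReal_Gamma_mul_ofReal_pi_mul_sq_norm_rpow]

variable [MeasurableSpace E] [OpensMeasurableSpace E]

lemma ofReal_mul_lintegral_nnnorm_rpow_neg_eq {X : Type*} [MeasurableSpace X] {ν : Measure X}
    [SFinite ν] {f : X → E} (hf : Measurable f) {a : ℝ} (ha : 0 < a) :
    ENNReal.ofReal (π ^ (-a) * Gamma a) * ∫⁻ x, (‖f x‖₊ : ℝ≥0∞) ^ (-(2 * a)) ∂ν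
      = ∫⁻ t in Ioi 0, ENNReal.ofReal (t ^ (a - 1))
          * ∫⁻ x, ENNReal.ofReal (rexp (-(π * ‖f x‖ ^ 2 * t))) ∂ν := by
  calc _ = ∫⁻ x, (∫⁻ t in Ioi 0,
          ENNReal.ofReal (t ^ (a - 1) * rexp (-(π * ‖f x‖ ^ 2 * t)))) ∂ν := by
        simp only [lintegral_rpow_mul_exp_neg_pi_sq_norm_mul ha,
          lintegral_const_mul' _ _ ENNReal.ofReal_ne_top]
    _ = ∫⁻ t in Ioi 0,
          ∫⁻ x, ENNReal.ofReal (t ^ (a - 1) * rexp (-(π * ‖f x‖ ^ 2 * t))) ∂ν :=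
        lintegral_lintegral_swap (by fun_prop)
    _ = _ := setLIntegral_congr_fun measurableSet_Ioi fun t (ht : 0 < t) => by
        simp only [ENNReal.ofReal_mul (rpow_nonneg ht.le _),
          lintegral_const_mul' _ _ ENNReal.ofReal_ne_top]

lemma ofReal_mul_lintegral_mul_nnnorm_rpow_neg_eq {ν : Measure E} [SFinite ν] {w : E → ℝ≥0∞}
    (hw : Measurable w) {a : ℝ} (ha : 0 < a) :
    ENNReal.ofReal (π ^ (-a) * Gamma a) * ∫⁻ z, w z * (‖z‖₊ : ℝ≥0∞) ^ (-(2 * a)) ∂ν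
      = ∫⁻ t in Ioi 0, ENNReal.ofReal (t ^ (-a - 1))
          * ∫⁻ z, w z * ENNReal.ofReal (rexp (-(π * ‖z‖ ^ 2 / t))) ∂ν := by
  calc _ = ∫⁻ z, (∫⁻ t in Ioi 0,
          w z * ENNReal.ofReal (t ^ (-a - 1) * rexp (-(π * ‖z‖ ^ 2 / t)))) ∂ν := by
        rw [← lintegral_const_mul' _ _ ENNReal.ofReal_ne_top]
        refine lintegral_congr fun z => ?_
        rw [lintegral_const_mul _ (by fun_prop), lintegral_rpow_mul_exp_neg_pi_sq_norm_div ha]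
        ring
    _ = ∫⁻ t in Ioi 0,
          ∫⁻ z, w z * ENNReal.ofReal (t ^ (-a - 1) * rexp (-(π * ‖z‖ ^ 2 / t))) ∂ν :=
        lintegral_lintegral_swap (by fun_prop)
    _ = _ := setLIntegral_congr_fun measurableSet_Ioi fun t (ht : 0 < t) => by
        rw [← lintegral_const_mul' _ _ ENNReal.ofReal_ne_top]
        refine lintegral_congr fun z => ?_
        rw [ENNReal.ofReal_mul (rpow_nonneg ht.le _), mul_left_comm]

end RieszKernel

section GaussianParseval

open _root_.Complex
open scoped RealInnerProductSpace

lemma integral_prod_cexp_inner_sub_mul_I {E : Type*} [NormedAddCommGroup E]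
    [InnerProductSpace ℝ E] [MeasurableSpace E] (μ : Measure E) [SFinite μ] (τ : E) :
    ∫ p, cexp (⟪p.1 - p.2, τ⟫ * I) ∂(μ.prod μ) = (‖charFun μ τ‖ ^ 2 : ℝ) := by
  have hsplit : ∀ p : E × E,
      cexp (⟪p.1 - p.2, τ⟫ * I) = cexp (⟪p.1, τ⟫ * I) * cexp (⟪p.2, -τ⟫ * I) := by
    intro p
    rw [← Complex.exp_add, inner_sub_left, inner_neg_right]
    push_cast
    ring_nf
  simp_rw [hsplit]
  rw [integral_prod_mul (fun x => cexp (⟪x, τ⟫ * I)) (fun y => cexp (⟪y, -τ⟫ * I)),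
    ← charFun_apply, ← charFun_apply, charFun_neg, mul_conj']
  push_cast
  rfl

variable {V : Type*} [NormedAddCommGroup V] [InnerProductSpace ℝ V] [FiniteDimensional ℝ V]
  [MeasurableSpace V] [BorelSpace V]

lemma integrable_exp_neg_pi_mul_sq_norm_div {t : ℝ} (ht : 0 < t) :
    Integrable (fun ξ : V => rexp (-(π * ‖ξ‖ ^ 2 / t))) := by
  have hb : 0 < ((π / t : ℝ) : ℂ).re := by simpa using div_pos pi_pos ht
  refine (GaussianFourier.integrable_cexp_neg_mul_sq_norm_add hb 0 (0 : V)).norm.congr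
    (.of_forall fun ξ => ?_)
  simp only [zero_mul, add_zero, ← ofReal_pow, ← ofReal_neg, ← ofReal_mul, norm_exp_ofReal]
  ring_nf

lemma integral_cexp_inner_mul_exp_neg_pi_mul_sq_norm_div {t : ℝ} (ht : 0 < t) (z : V) :
    ∫ ξ : V, cexp (⟪z, -(2 * π) • ξ⟫ * I) * rexp (-(π * ‖ξ‖ ^ 2 / t))
      = (t ^ (Module.finrank ℝ V / 2 : ℝ) * rexp (-(π * ‖z‖ ^ 2 * t)) : ℝ) := by
  have hb : 0 < ((π / t : ℝ) : ℂ).re := by simpa using div_pos pi_pos ht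
  have hgauss : ∀ ξ : V, cexp (⟪z, -(2 * π) • ξ⟫ * I) * rexp (-(π * ‖ξ‖ ^ 2 / t))
      = cexp (-((π / t : ℝ) : ℂ) * ‖ξ‖ ^ 2 + (-2 * π * I) * ⟪z, ξ⟫) := by
    intro ξ
    rw [ofReal_exp, ← Complex.exp_add, inner_smul_right]
    push_cast
    ring_nf
  simp_rw [hgauss]
  rw [GaussianFourier.integral_cexp_neg_mul_sq_norm_add hb]
  have hpi : (π : ℂ) / ((π / t : ℝ) : ℂ) = t := by
    push_cast
    field_simp [ofReal_ne_zero.mpr pi_ne_zero]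
  rw [hpi, ofReal_mul, ofReal_cpow ht.le, ofReal_exp]
  push_cast
  congr 2
  field_simp
  rw [I_sq]
  ring

lemma integral_exp_neg_pi_sq_norm_sub_eq_integral_norm_charFun_sq (μ : Measure V)
    [IsFiniteMeasure μ] {t : ℝ} (ht : 0 < t) :
    t ^ (Module.finrank ℝ V / 2 : ℝ) * ∫ p, rexp (-(π * ‖p.1 - p.2‖ ^ 2 * t)) ∂(μ.prod μ)
      = ∫ ξ, ‖charFun μ (-(2 * π) • ξ)‖ ^ 2 * rexp (-(π * ‖ξ‖ ^ 2 / t)) := by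
  set F : (V × V) × V → ℂ := fun q => cexp (⟪q.1.1 - q.1.2, -(2 * π) • q.2⟫ * I)
    * rexp (-(π * ‖q.2‖ ^ 2 / t))
  have hF : Integrable F ((μ.prod μ).prod volume) := by
    refine Integrable.mono' ((integrable_const (1 : ℝ)).mul_prod
      (integrable_exp_neg_pi_mul_sq_norm_div ht)) (by fun_prop)
      (.of_forall fun q => ?_)
    simp only [F, norm_mul, norm_exp_ofReal_mul_I, one_mul, norm_real,
      norm_of_nonneg (exp_pos _).le, le_refl]
  apply ofReal_injective
  calc ((t ^ (Module.finrank ℝ V / 2 : ℝ)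
          * ∫ p, rexp (-(π * ‖p.1 - p.2‖ ^ 2 * t)) ∂(μ.prod μ) : ℝ) : ℂ)
      = ∫ p, (∫ ξ, F (p, ξ)) ∂(μ.prod μ) := by
        rw [← integral_const_mul, ← integral_complex_ofReal]
        simp only [F, integral_cexp_inner_mul_exp_neg_pi_mul_sq_norm_div ht]
    _ = ∫ ξ, ∫ p, F (p, ξ) ∂(μ.prod μ) := integral_integral_swap hF
    _ = _ := by
        simp only [F, integral_mul_const, integral_prod_cexp_inner_sub_mul_I, ← ofReal_mul]
        exact integral_complex_ofReal

lemma ofReal_mul_lintegral_exp_neg_pi_sq_norm_sub (μ : Measure V) [IsFiniteMeasure μ] {t : ℝ}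
    (ht : 0 < t) :
    ENNReal.ofReal (t ^ (Module.finrank ℝ V / 2 : ℝ))
        * ∫⁻ p, ENNReal.ofReal (rexp (-(π * ‖p.1 - p.2‖ ^ 2 * t))) ∂(μ.prod μ)
      = ∫⁻ ξ, (‖charFun μ (-(2 * π) • ξ)‖₊ : ℝ≥0∞) ^ 2
          * ENNReal.ofReal (rexp (-(π * ‖ξ‖ ^ 2 / t))) := by
  have hL : Integrable (fun p : V × V => rexp (-(π * ‖p.1 - p.2‖ ^ 2 * t))) (μ.prod μ) := by
    refine Integrable.mono' (integrable_const 1) (by fun_prop) (.of_forall fun p => ?_)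
    rw [norm_of_nonneg (exp_pos _).le, exp_le_one_iff, neg_nonpos]
    positivity
  have hR : Integrable
      (fun ξ : V => ‖charFun μ (-(2 * π) • ξ)‖ ^ 2 * rexp (-(π * ‖ξ‖ ^ 2 / t))) := by
    refine Integrable.mono' ((integrable_exp_neg_pi_mul_sq_norm_div ht).const_mul
      (μ.real univ ^ 2)) (by fun_prop) (.of_forall fun ξ => ?_)
    rw [norm_of_nonneg (by positivity)]
    gcongr
    exact norm_charFun_le _
  rw [← ofReal_integral_eq_lintegral_ofReal hL (.of_forall fun _ => (exp_pos _).le),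
    ← ENNReal.ofReal_mul (by positivity),
    integral_exp_neg_pi_sq_norm_sub_eq_integral_norm_charFun_sq μ ht,
    ofReal_integral_eq_lintegral_ofReal hR (.of_forall fun _ => by positivity)]
  refine lintegral_congr fun ξ => ?_
  rw [ENNReal.ofReal_mul (by positivity), ENNReal.ofReal_pow (norm_nonneg _), ofReal_norm,
    enorm_eq_nnnorm]

end GaussianParseval

lemma ft_eq_charFun {n : ℕ} (μ : Measure (En n)) (ξ : En n) :
    ft μ ξ = charFun μ (-(2 * π) • ξ) := by
  rw [ft, charFun_apply]
  congr 1 with x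
  rw [real_inner_smul_right]
  push_cast
  ring_nf

theorem ofReal_mul_energy_eq {n : ℕ} (μ : Measure (En n)) [IsFiniteMeasure μ] {s : ℝ}
    (h0 : 0 < s) (h1 : s < n) :
    ENNReal.ofReal (π ^ (-(s / 2)) * Gamma (s / 2)) * energy μ s
      = ENNReal.ofReal (π ^ (-((n - s) / 2)) * Gamma ((n - s) / 2))
          * ∫⁻ ξ, (‖ft μ ξ‖₊ : ℝ≥0∞) ^ 2 * (‖ξ‖₊ : ℝ≥0∞) ^ (s - n) := by
  calc _ = ENNReal.ofReal (π ^ (-(s / 2)) * Gamma (s / 2))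
        * ∫⁻ p, (‖p.1 - p.2‖₊ : ℝ≥0∞) ^ (-(2 * (s / 2))) ∂(μ.prod μ) := by
        rw [energy, lintegral_prod _ (by fun_prop), mul_div_cancel₀ s two_ne_zero]
    _ = ∫⁻ t in Ioi 0, ENNReal.ofReal (t ^ (s / 2 - 1))
          * ∫⁻ p, ENNReal.ofReal (rexp (-(π * ‖p.1 - p.2‖ ^ 2 * t))) ∂(μ.prod μ) :=
        ofReal_mul_lintegral_nnnorm_rpow_neg_eq (by fun_prop) (by positivity)
    _ = ∫⁻ t in Ioi 0, ENNReal.ofReal (t ^ (-((n - s) / 2) - 1))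
          * ∫⁻ ξ, (‖ft μ ξ‖₊ : ℝ≥0∞) ^ 2 * ENNReal.ofReal (rexp (-(π * ‖ξ‖ ^ 2 / t))) := by
        refine setLIntegral_congr_fun measurableSet_Ioi fun t (ht : 0 < t) => ?_
        have hparseval := ofReal_mul_lintegral_exp_neg_pi_sq_norm_sub μ ht
        rw [finrank_euclideanSpace_fin] at hparseval
        simp_rw [ft_eq_charFun]
        rw [← hparseval, ← mul_assoc, ← ENNReal.ofReal_mul (rpow_nonneg ht.le _), ← rpow_add ht,
          show -((n - s) / 2) - 1 + n / 2 = s / 2 - 1 by ring]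
    _ = _ := by
        rw [show s - n = -(2 * ((n - s) / 2)) by ring]
        exact (ofReal_mul_lintegral_mul_nnnorm_rpow_neg_eq
          (by simp only [ft_eq_charFun]; fun_prop) (by linarith)).symm

/-- `I_s(μ) = c(n,s) ∫ |μ̂(ξ)|² |ξ|^{s-n} dξ` for `0 < s < n`. -/
theorem stmt5 (n : ℕ) (s : ℝ) (h0 : 0 < s) (h1 : s < n) :
    ∃ c : ℝ, 0 < c ∧ ∀ (μ : Measure (En n)) [IsFiniteMeasure μ],
      (∃ K : Set (En n), IsCompact K ∧ μ Kᶜ = 0) →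
      energy μ s
        = ENNReal.ofReal c *
          ∫⁻ ξ, (‖ft μ ξ‖₊ : ℝ≥0∞) ^ 2 * (‖ξ‖₊ : ℝ≥0∞) ^ (s - (n : ℝ)) ∂(volume : Measure (En n)) := by
  have hGamma : ∀ a : ℝ, 0 < a → 0 < π ^ (-a) * Gamma a := fun a ha =>
    mul_pos (rpow_pos_of_pos pi_pos _) (Gamma_pos_of_pos ha)
  have hcL := hGamma (s / 2) (by linarith)
  refine ⟨(π ^ (-((n - s) / 2)) * Gamma ((n - s) / 2)) / (π ^ (-(s / 2)) * Gamma (s / 2)),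
    div_pos (hGamma _ (by linarith)) hcL, fun μ _ _ => ?_⟩
  rw [ENNReal.ofReal_div_of_pos hcL, ← ENNReal.mul_div_right_comm,
    ENNReal.eq_div_iff (ENNReal.ofReal_pos.mpr hcL).ne' ENNReal.ofReal_ne_top]
  exact ofReal_mul_energy_eq μ h0 h1
end
end
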